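/- Quantum Ingster–Suslina bound: In the setting of the quantum Ingster–Suslina identity, D_{χ²}(E_θ[ρ_θ^{⊗n}] ‖ σ^{⊗n}) ≤ E_{θ,θ'}[exp(n · tr(σ⁻¹ (ρ_θ − σ)(ρ_{θ'} − σ)))] − 1. -/

import Mathlib

open Matrix
open scoped ComplexOrder

/-- The `n`-fold tensor (Kronecker) power of a matrix, indexed by `Fin n → Fin d`. -/
noncomputable def tensorPow {d : ℕ} (A : Matrix (Fin d) (Fin d) ℂ) (n : ℕ) :
    Matrix (Fin n → Fin d) (Fin n → Fin d) ℂ :=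
  Matrix.of fun x y => ∏ i, A (x i) (y i)

/-!
Expanding the tensor powers, the χ²-term is `∑ p_t p_t' (1 + w_tt')^n` with
`w_tt' = tr(σ⁻¹(ρ_t − σ)(ρ_t' − σ))`. These overlaps need not be real, so `1 + x ≤ exp x` cannot be
applied term by term. Instead, the `k`-th moment `∑ p_t p_t' w_tt'^k` is `tr((σ⁻¹)^{⊗k} F²)` with
`F = ∑ p_t (ρ_t − σ)^{⊗k}` Hermitian, hence nonnegative; so `C(n, k) ≤ n^k / k!` bounds the
binomial expansion of `∑ p_t p_t' (1 + w_tt')^n` by the exponential series of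
`∑ p_t p_t' exp(n w_tt')`, whose real part is at most `∑ p_t p_t' exp(n Re w_tt')`.
-/

open Finset in
theorem re_sum_mul_one_add_pow_le_sum_mul_exp {κ : Type*} [Fintype κ] (q : κ → ℝ)
    (hq : ∀ i, 0 ≤ q i) (z : κ → ℂ) (hz : ∀ k : ℕ, 0 ≤ (∑ i, (q i : ℂ) * z i ^ k).re) (n : ℕ) :
    (∑ i, (q i : ℂ) * (1 + z i) ^ n).re ≤ ∑ i, q i * Real.exp (n * (z i).re) := by
  set M : ℕ → ℝ := fun k => (∑ i, (q i : ℂ) * z i ^ k).re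
  have hbinom : ∑ i, (q i : ℂ) * (1 + z i) ^ n
      = ∑ k ∈ range (n + 1), ((n.choose k : ℝ) : ℂ) * ∑ i, (q i : ℂ) * z i ^ k := by
    simp only [add_comm (1 : ℂ), add_pow, one_pow, mul_one, mul_sum]
    rw [sum_comm]
    congr! 2
    push_cast
    ring
  have hexp : HasSum (fun k => ((n : ℝ) ^ k / k.factorial : ℝ) * M k)
      (∑ i, (q i : ℂ) * Complex.exp (n * z i)).re := by
    have hseries : HasSum (fun k => ∑ i, (q i : ℂ) * ((n * z i) ^ k / k.factorial))
        (∑ i, (q i : ℂ) * Complex.exp (n * z i)) :=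
      hasSum_sum fun i _ => by
        rw [Complex.exp_eq_exp_ℂ]
        exact (NormedSpace.expSeries_div_hasSum_exp ((n : ℂ) * z i)).mul_left (q i : ℂ)
    refine (Complex.hasSum_re hseries).congr_fun fun k => ?_
    rw [← Complex.re_ofReal_mul, mul_sum]
    push_cast
    congr! 2 with i
    ring
  calc (∑ i, (q i : ℂ) * (1 + z i) ^ n).re
      = ∑ k ∈ range (n + 1), (n.choose k : ℝ) * M k := by
        simp only [hbinom, Complex.re_sum, Complex.re_ofReal_mul, M]
    _ ≤ ∑ k ∈ range (n + 1), ((n : ℝ) ^ k / k.factorial : ℝ) * M k :=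
      sum_le_sum fun k _ => mul_le_mul_of_nonneg_right (Nat.choose_le_pow_div k n) (hz k)
    _ ≤ (∑ i, (q i : ℂ) * Complex.exp (n * z i)).re :=
      sum_le_hasSum _ (fun k _ => mul_nonneg (by positivity) (hz k)) hexp
    _ ≤ ∑ i, q i * Real.exp (n * (z i).re) := by
      rw [Complex.re_sum]
      gcongr with i
      rw [Complex.re_ofReal_mul]
      refine mul_le_mul_of_nonneg_left ?_ (hq i)
      calc (Complex.exp (n * z i)).re ≤ ‖Complex.exp (n * z i)‖ := Complex.re_le_norm _
        _ = Real.exp (n * (z i).re) := by simp [Complex.norm_exp]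

namespace Matrix

lemma trace_inv_mul_sub_mul_sub {n K : Type*} [Fintype n] [DecidableEq n] [Field K]
    {σ ρ ρ' : Matrix n n K} (hσ : IsUnit σ.det) (hσtr : σ.trace = 1) (hρ : ρ.trace = 1)
    (hρ' : ρ'.trace = 1) :
    (σ⁻¹ * ((ρ - σ) * (ρ' - σ))).trace = (σ⁻¹ * (ρ * ρ')).trace - 1 := by
  have hρσ : (σ⁻¹ * (ρ * σ)).trace = 1 := by
    rw [← mul_assoc, trace_mul_comm, ← mul_assoc, mul_nonsing_inv σ hσ, one_mul, hρ]
  have hσρ' : (σ⁻¹ * (σ * ρ')).trace = 1 := by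
    rw [← mul_assoc, nonsing_inv_mul σ hσ, one_mul, hρ']
  have hσσ : (σ⁻¹ * (σ * σ)).trace = 1 := by
    rw [← mul_assoc, nonsing_inv_mul σ hσ, one_mul, hσtr]
  simp only [sub_mul, mul_sub, trace_sub, hρσ, hσρ', hσσ]
  ring

lemma PosSemidef.trace_mul_mul_self_nonneg {n R : Type*} [Fintype n] [CommRing R]
    [PartialOrder R] [StarRing R] [StarOrderedRing R] {M F : Matrix n n R} (hM : M.PosSemidef)
    (hF : F.IsHermitian) : 0 ≤ (M * (F * F)).trace := by
  rw [← mul_assoc, trace_mul_comm, ← mul_assoc]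
  nth_rewrite 1 [← hF.eq]
  exact (hM.conjTranspose_mul_mul_same F).trace_nonneg

end Matrix

section tensorPow

variable {d : ℕ}

lemma tensorPow_mul (A B : Matrix (Fin d) (Fin d) ℂ) (n : ℕ) :
    tensorPow A n * tensorPow B n = tensorPow (A * B) n := by
  ext x y
  simp only [tensorPow, mul_apply, of_apply, ← Finset.prod_mul_distrib]
  exact (Fintype.prod_sum fun i j => A (x i) j * B j (y i)).symm

lemma trace_tensorPow (A : Matrix (Fin d) (Fin d) ℂ) (n : ℕ) :
    (tensorPow A n).trace = A.trace ^ n :=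
  (Fintype.sum_pow (fun j => A j j) n).symm

lemma tensorPow_one (n : ℕ) : tensorPow (1 : Matrix (Fin d) (Fin d) ℂ) n = 1 := by
  ext x y
  by_cases h : x = y
  · subst h
    simp [tensorPow]
  · obtain ⟨i, hi⟩ := Function.ne_iff.mp h
    rw [one_apply_ne h, tensorPow, of_apply]
    exact Finset.prod_eq_zero (Finset.mem_univ i) (one_apply_ne hi)

lemma conjTranspose_tensorPow (A : Matrix (Fin d) (Fin d) ℂ) (n : ℕ) :
    (tensorPow A n)ᴴ = tensorPow Aᴴ n := by
  ext x y
  simp [tensorPow, star_prod]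

lemma tensorPow_inv {σ : Matrix (Fin d) (Fin d) ℂ} (hσ : IsUnit σ.det) (n : ℕ) :
    (tensorPow σ n)⁻¹ = tensorPow σ⁻¹ n :=
  inv_eq_left_inv (by rw [tensorPow_mul, nonsing_inv_mul σ hσ, tensorPow_one])

lemma Matrix.IsHermitian.tensorPow {A : Matrix (Fin d) (Fin d) ℂ} (hA : A.IsHermitian) (n : ℕ) :
    (_root_.tensorPow A n).IsHermitian := by
  rw [IsHermitian, conjTranspose_tensorPow, hA.eq]

lemma Matrix.PosSemidef.tensorPow {A : Matrix (Fin d) (Fin d) ℂ} (hA : A.PosSemidef) (n : ℕ) :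
    (_root_.tensorPow A n).PosSemidef := by
  obtain ⟨B, rfl⟩ : ∃ B : Matrix (Fin d) (Fin d) ℂ, A = Bᴴ * B := by
    open scoped MatrixOrder in exact CStarAlgebra.nonneg_iff_eq_star_mul_self.mp hA.nonneg
  rw [← tensorPow_mul, ← conjTranspose_tensorPow]
  exact posSemidef_conjTranspose_mul_self _

lemma trace_tensorPow_mul_sum_smul_mul_sum_smul {ι : Type*} [Fintype ι]
    (M : Matrix (Fin d) (Fin d) ℂ) (A : ι → Matrix (Fin d) (Fin d) ℂ) (c : ι → ℂ) (n : ℕ) :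
    (tensorPow M n * ((∑ i, c i • tensorPow (A i) n) * (∑ j, c j • tensorPow (A j) n))).trace
      = ∑ i, ∑ j, c i * c j * (M * (A i * A j)).trace ^ n := by
  rw [Finset.sum_mul_sum]
  simp only [Finset.mul_sum, trace_sum, smul_mul_assoc, mul_smul_comm, trace_smul,
    tensorPow_mul, trace_tensorPow, smul_eq_mul, mul_assoc]
  exact Finset.sum_congr rfl fun i _ => Finset.sum_congr rfl fun j _ => mul_left_comm _ _ _

lemma sum_sum_mul_trace_mul_pow_nonneg {ι : Type*} [Fintype ι] {M : Matrix (Fin d) (Fin d) ℂ}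
    (hM : M.PosSemidef) {A : ι → Matrix (Fin d) (Fin d) ℂ} (hA : ∀ i, (A i).IsHermitian)
    (p : ι → ℝ) (n : ℕ) :
    0 ≤ ∑ i, ∑ j, (p i : ℂ) * p j * (M * (A i * A j)).trace ^ n := by
  rw [← trace_tensorPow_mul_sum_smul_mul_sum_smul]
  refine (hM.tensorPow n).trace_mul_mul_self_nonneg ?_
  exact isSelfAdjoint_sum _ fun i _ => ((hA i).tensorPow n).smul (Complex.conj_ofReal _)

end tensorPow

theorem quantum_ingster_suslina_bound_general {d m : ℕ} (n : ℕ)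
    (σ : Matrix (Fin d) (Fin d) ℂ) (hσ : σ.PosDef) (hσtr : σ.trace = 1)
    (ρ : Fin m → Matrix (Fin d) (Fin d) ℂ)
    (hρ : ∀ t, (ρ t).PosSemidef) (hρtr : ∀ t, (ρ t).trace = 1)
    (p : Fin m → ℝ) (hp : ∀ t, 0 ≤ p t) :
    (((tensorPow σ n)⁻¹ *
        ((∑ t, (p t : ℂ) • tensorPow (ρ t) n) * (∑ t, (p t : ℂ) • tensorPow (ρ t) n))).trace).re - 1
      ≤ (∑ t, ∑ t', p t * p t' *
          Real.exp (n * ((σ⁻¹ * ((ρ t - σ) * (ρ t' - σ))).trace).re)) - 1 := by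
  have hdet : IsUnit σ.det := (isUnit_iff_isUnit_det σ).mp hσ.isUnit
  set w : Fin m → Fin m → ℂ := fun t t' => (σ⁻¹ * ((ρ t - σ) * (ρ t' - σ))).trace
  have hoverlap (t t' : Fin m) : (σ⁻¹ * (ρ t * ρ t')).trace = 1 + w t t' := by
    simp only [w, trace_inv_mul_sub_mul_sub hdet hσtr (hρtr t) (hρtr t'), add_sub_cancel]
  have hmoments (k : ℕ) :
      0 ≤ (∑ x : Fin m × Fin m, ((p x.1 * p x.2 : ℝ) : ℂ) * w x.1 x.2 ^ k).re := by
    have := sum_sum_mul_trace_mul_pow_nonneg hσ.inv.posSemidef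
      (fun t => (hρ t).isHermitian.sub hσ.isHermitian) p k
    simpa [Fintype.sum_prod_type] using (Complex.le_def.mp this).1
  rw [tensorPow_inv hdet, trace_tensorPow_mul_sum_smul_mul_sum_smul]
  simp only [hoverlap]
  simpa [Fintype.sum_prod_type] using
    re_sum_mul_one_add_pow_le_sum_mul_exp (fun x : Fin m × Fin m => p x.1 * p x.2)
      (fun _ => mul_nonneg (hp _) (hp _)) (fun x => w x.1 x.2) hmoments n

/-- quantum Ingster–Suslina bound:
`D_{χ²}(E_θ[ρ_θ^{⊗n}] ‖ σ^{⊗n}) ≤ E_{θ,θ'}[exp(n · tr(σ⁻¹(ρ_θ−σ)(ρ_{θ'}−σ)))] − 1`. -/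
theorem quantum_ingster_suslina_bound {d m : ℕ} (n : ℕ) (hn : 1 ≤ n)
    (σ : Matrix (Fin d) (Fin d) ℂ) (hσ : σ.PosDef) (hσtr : σ.trace = 1)
    (ρ : Fin m → Matrix (Fin d) (Fin d) ℂ)
    (hρ : ∀ t, (ρ t).PosSemidef) (hρtr : ∀ t, (ρ t).trace = 1)
    (p : Fin m → ℝ) (hp : ∀ t, 0 ≤ p t) (hps : ∑ t, p t = 1) :
    (((tensorPow σ n)⁻¹ *
        ((∑ t, (p t : ℂ) • tensorPow (ρ t) n) * (∑ t, (p t : ℂ) • tensorPow (ρ t) n))).trace).re - 1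
      ≤ (∑ t, ∑ t', p t * p t' *
          Real.exp (n * ((σ⁻¹ * ((ρ t - σ) * (ρ t' - σ))).trace).re)) - 1 :=
  quantum_ingster_suslina_bound_general n σ hσ hσtr ρ hρ hρtr p hp
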